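/- Let (A,∘) be a finite-dimensional alternative algebra over a field of characteristic ≠ 2 equipped with a nondegenerate symmetric invariant bilinear form B, i.e., B(x∘y, z) = B(x, y∘z) for all x,y,z ∈ A, and define φ: A → A* by ⟨φ(x), y⟩ = B(x,y). Let r ∈ A⊗A be skew-symmetric and set T̃_r = T_r∘φ : A → A. Then r is a solution of the alternative Yang–Baxter equation if and only if T̃_r satisfies the Rota–Baxter relation of weight zero: T̃_r(x)∘T̃_r(y) = T̃_r(T̃_r(x)∘y + x∘T̃_r(y)) for all x,y ∈ A. In that case x≺y = x∘T̃_r(y) and x≻y = T̃_r(x)∘y define a pre-alternative algebra structure on A. -/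
import Mathlib


open TensorProduct

universe u v w

variable {k : Type u} [Field k]

section Defs

variable {M : Type v} {V : Type w} [AddCommGroup M] [Module k M] [AddCommGroup V] [Module k V]

/-- Alternative algebra: both alternative laws. -/
def IsAlt (m : M →ₗ[k] M →ₗ[k] M) : Prop :=
  (∀ x y : M, m (m x x) y = m x (m x y)) ∧ (∀ x y : M, m (m y x) x = m y (m x x))

/-- right associator -/
def rAssoc (p s : M →ₗ[k] M →ₗ[k] M) (x y z : M) : M :=
  p (p x y) z - p x (p y z + s y z)

/-- middle associator -/
def mAssoc (p s : M →ₗ[k] M →ₗ[k] M) (x y z : M) : M :=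
  p (s x y) z - s x (p y z)

/-- left associator -/
def lAssoc (p s : M →ₗ[k] M →ₗ[k] M) (x y z : M) : M :=
  s (p x y + s x y) z - s x (s y z)

/-- Pre-alternative algebra. -/
def IsPreAlt (p s : M →ₗ[k] M →ₗ[k] M) : Prop :=
  (∀ x y z : M, mAssoc p s x y z + rAssoc p s y x z = 0) ∧
  (∀ x y z : M, mAssoc p s x y z + lAssoc p s x z y = 0) ∧
  (∀ x y : M, rAssoc p s y x x = 0) ∧
  (∀ x y : M, lAssoc p s x x y = 0)

/-- Bimodule of an alternative algebra. -/
def IsAltBimod (m : M →ₗ[k] M →ₗ[k] M) (L R : M →ₗ[k] Module.End k V) : Prop :=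
  (∀ x : M, L (m x x) = L x * L x) ∧
  (∀ x : M, R (m x x) = R x * R x) ∧
  (∀ x y : M, R y * L x - L x * R y = R (m x y) - R y * R x) ∧
  (∀ x y : M, L (m y x) - L y * L x = L y * R x - R x * L y)

/-- Bimodule of a pre-alternative algebra. -/
def IsPreAltBimod (p s : M →ₗ[k] M →ₗ[k] M) (Lp Rp Ls Rs : M →ₗ[k] Module.End k V) : Prop :=
  (∀ x y : M, Ls ((p x y + s x y) + (p y x + s y x)) = Ls x * Ls y + Ls y * Ls x) ∧
  (∀ x y : M, Rs y * ((Lp x + Ls x) + (Rp x + Rs x)) = Ls x * Rs y + Rs (s x y)) ∧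
  (∀ x y : M, Rp y * Ls x + Rp y * Rp x = Ls x * Rp y + Rp (p x y + s x y)) ∧
  (∀ x y : M, Rp y * Rs x + Rp y * Lp x = Rs (p x y) + Lp x * (Rp y + Rs y)) ∧
  (∀ x y : M, Lp (s x y) + Lp (p y x) = Ls x * Lp y + Lp y * (Lp x + Ls x)) ∧
  (∀ x y : M, Ls (p y x + s y x) + Rp x * Ls y = Ls y * Ls x + Ls y * Rp x) ∧
  (∀ x y : M, Rs y * (Rp x + Rs x) + Rp x * Rs y = Rs (s x y) + Rs (p y x)) ∧
  (∀ x y : M, Rs x * (Lp y + Ls y) + Lp (s y x) = Ls y * Rs x + Ls y * Lp x) ∧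
  (∀ x y : M, Rp y * Rp x + Rp x * Rp y = Rp ((p x y + s x y) + (p y x + s y x))) ∧
  (∀ x y : M, Rp y * Lp x + Lp (p x y) = Lp x * ((Rp y + Rs y) + (Lp y + Ls y)))

/-- Dual family of endomorphisms: `(dualT L) x = (L x)^*`. -/
noncomputable def dualT (L : M →ₗ[k] Module.End k V) :
    M →ₗ[k] Module.End k (Module.Dual k V) :=
  (Module.Dual.transpose (R := k) (M := V) (M' := V)) ∘ₗ L

/-- The linear map `A* → A` associated to an element of `A ⊗ A`:
`⟨u* ⊗ v*, r⟩ = ⟨u*, T_r v*⟩`, i.e. `T_r(v*) = Σ v*(bᵢ) • aᵢ`. -/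
noncomputable def Tr : (M ⊗[k] M) →ₗ[k] Module.Dual k M →ₗ[k] M :=
  TensorProduct.lift (LinearMap.mk₂ k
    (fun a b => (Module.Dual.eval k M b).smulRight a)
    (fun a a' b => by ext f; simp)
    (fun c a b => by ext f; simp only [LinearMap.smulRight_apply, LinearMap.smul_apply,
      Module.Dual.eval_apply]; exact smul_comm _ _ _)
    (fun a b b' => by ext f; simp [add_smul])
    (fun c a b => by ext f; simp [map_smul, mul_smul]))

noncomputable def tlift (m : M →ₗ[k] M →ₗ[k] M) : M ⊗[k] M →ₗ[k] M := TensorProduct.lift m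

/-- `r₁₂ ⋄ r₁₃` : `(a⊗b)⊗(c⊗d) ↦ (a⋄c)⊗b⊗d`. -/
noncomputable def comp12_13 (m : M →ₗ[k] M →ₗ[k] M) :
    (M ⊗[k] M) ⊗[k] (M ⊗[k] M) →ₗ[k] M ⊗[k] (M ⊗[k] M) :=
  (TensorProduct.map (tlift m) LinearMap.id) ∘ₗ
    (TensorProduct.tensorTensorTensorComm k M M M M).toLinearMap

/-- `r₁₃ ⋄ r₁₂` : `(a⊗b)⊗(c⊗d) ↦ (a⋄c)⊗d⊗b`. -/
noncomputable def comp13_12 (m : M →ₗ[k] M →ₗ[k] M) :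
    (M ⊗[k] M) ⊗[k] (M ⊗[k] M) →ₗ[k] M ⊗[k] (M ⊗[k] M) :=
  (TensorProduct.map (tlift m) (TensorProduct.comm k M M).toLinearMap) ∘ₗ
    (TensorProduct.tensorTensorTensorComm k M M M M).toLinearMap

/-- `r₁₂ ⋄ r₂₃` : `(a⊗b)⊗(c⊗d) ↦ a⊗(b⋄c)⊗d`. -/
noncomputable def comp12_23 (m : M →ₗ[k] M →ₗ[k] M) :
    (M ⊗[k] M) ⊗[k] (M ⊗[k] M) →ₗ[k] M ⊗[k] (M ⊗[k] M) :=
  (TensorProduct.map LinearMap.id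
      ((TensorProduct.map (tlift m) LinearMap.id) ∘ₗ
        (TensorProduct.assoc k M M M).symm.toLinearMap)) ∘ₗ
    (TensorProduct.assoc k M M (M ⊗[k] M)).toLinearMap

/-- `r₂₃ ⋄ r₁₂` : `(a⊗b)⊗(c⊗d) ↦ c⊗(a⋄d)⊗b`. -/
noncomputable def comp23_12 (m : M →ₗ[k] M →ₗ[k] M) :
    (M ⊗[k] M) ⊗[k] (M ⊗[k] M) →ₗ[k] M ⊗[k] (M ⊗[k] M) :=
  (TensorProduct.map LinearMap.id
      ((TensorProduct.map (tlift m.flip) LinearMap.id) ∘ₗ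
        (TensorProduct.assoc k M M M).symm.toLinearMap)) ∘ₗ
    (TensorProduct.assoc k M M (M ⊗[k] M)).toLinearMap ∘ₗ
    (TensorProduct.comm k (M ⊗[k] M) (M ⊗[k] M)).toLinearMap

/-- `r₁₃ ⋄ r₂₃` : `(a⊗b)⊗(c⊗d) ↦ a⊗c⊗(b⋄d)`. -/
noncomputable def comp13_23 (m : M →ₗ[k] M →ₗ[k] M) :
    (M ⊗[k] M) ⊗[k] (M ⊗[k] M) →ₗ[k] M ⊗[k] (M ⊗[k] M) :=
  (TensorProduct.map LinearMap.id (TensorProduct.map LinearMap.id (tlift m))) ∘ₗ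
    (TensorProduct.assoc k M M (M ⊗[k] M)).toLinearMap ∘ₗ
    (TensorProduct.tensorTensorTensorComm k M M M M).toLinearMap

/-- `r₂₃ ⋄ r₁₃` : `(a⊗b)⊗(c⊗d) ↦ c⊗a⊗(b⋄d)`. -/
noncomputable def comp23_13 (m : M →ₗ[k] M →ₗ[k] M) :
    (M ⊗[k] M) ⊗[k] (M ⊗[k] M) →ₗ[k] M ⊗[k] (M ⊗[k] M) :=
  (TensorProduct.map LinearMap.id (TensorProduct.map LinearMap.id (tlift m))) ∘ₗ
    (TensorProduct.assoc k M M (M ⊗[k] M)).toLinearMap ∘ₗ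
    (TensorProduct.map (TensorProduct.comm k M M).toLinearMap LinearMap.id) ∘ₗ
    (TensorProduct.tensorTensorTensorComm k M M M M).toLinearMap

/-- The alternative Yang–Baxter expression `r₂₃∘r₁₂ − r₁₂∘r₁₃ − r₁₃∘r₂₃`. -/
noncomputable def ayb (m : M →ₗ[k] M →ₗ[k] M) (r : M ⊗[k] M) : M ⊗[k] (M ⊗[k] M) :=
  comp23_12 m (r ⊗ₜ r) - comp12_13 m (r ⊗ₜ r) - comp13_23 m (r ⊗ₜ r)

/-- PA-equations. -/
noncomputable def PA11 (p s : M →ₗ[k] M →ₗ[k] M) (r : M ⊗[k] M) : M ⊗[k] (M ⊗[k] M) :=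
  comp12_13 (p + s) (r ⊗ₜ r) - comp23_12 s (r ⊗ₜ r) - comp13_23 p (r ⊗ₜ r)

noncomputable def PA12 (p s : M →ₗ[k] M →ₗ[k] M) (r : M ⊗[k] M) : M ⊗[k] (M ⊗[k] M) :=
  comp13_12 (p + s) (r ⊗ₜ r) - comp12_23 p (r ⊗ₜ r) - comp23_13 s (r ⊗ₜ r)

noncomputable def PA21 (p s : M →ₗ[k] M →ₗ[k] M) (r : M ⊗[k] M) : M ⊗[k] (M ⊗[k] M) :=
  comp12_23 (p + s) (r ⊗ₜ r) - comp23_13 p (r ⊗ₜ r) - comp13_12 s (r ⊗ₜ r)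

noncomputable def PA22 (p s : M →ₗ[k] M →ₗ[k] M) (r : M ⊗[k] M) : M ⊗[k] (M ⊗[k] M) :=
  comp23_12 (p + s) (r ⊗ₜ r) - comp13_23 s (r ⊗ₜ r) - comp12_13 p (r ⊗ₜ r)

noncomputable def PA31 (p s : M →ₗ[k] M →ₗ[k] M) (r : M ⊗[k] M) : M ⊗[k] (M ⊗[k] M) :=
  comp13_23 (p + s) (r ⊗ₜ r) - comp12_13 s (r ⊗ₜ r) - comp23_12 p (r ⊗ₜ r)

noncomputable def PA32 (p s : M →ₗ[k] M →ₗ[k] M) (r : M ⊗[k] M) : M ⊗[k] (M ⊗[k] M) :=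
  comp23_13 (p + s) (r ⊗ₜ r) - comp13_12 p (r ⊗ₜ r) - comp12_23 s (r ⊗ₜ r)

/-- Semidirect sum product on `M × V` for an alternative algebra `M` and a bimodule `(V,L,R)`. -/
def sd (m : M →ₗ[k] M →ₗ[k] M) (L R : M →ₗ[k] Module.End k V) :
    (M × V) →ₗ[k] (M × V) →ₗ[k] (M × V) :=
  LinearMap.mk₂ k (fun x y => (m x.1 y.1, L x.1 y.2 + R y.1 x.2))
    (fun x x' y => by refine Prod.ext ?_ ?_ <;> simp [map_add] <;> abel)
    (fun c x y => by refine Prod.ext ?_ ?_ <;> simp [map_smul, smul_add])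
    (fun x y y' => by refine Prod.ext ?_ ?_ <;> simp [map_add] <;> abel)
    (fun c x y => by refine Prod.ext ?_ ?_ <;> simp [map_smul, smul_add])

end Defs

section Aux

variable {A : Type v} [AddCommGroup A] [Module k A]

@[simp] lemma Tr_tmul (a b : A) (f : Module.Dual k A) :
    Tr (a ⊗ₜ[k] b) f = f b • a := by
  simp [Tr]

noncomputable def ev3 (f g h : Module.Dual k A) : A ⊗[k] (A ⊗[k] A) →ₗ[k] k :=
  TensorProduct.dualDistrib k A (A ⊗[k] A) (f ⊗ₜ TensorProduct.dualDistrib k A A (g ⊗ₜ h))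

@[simp] lemma ev3_tmul (f g h : Module.Dual k A) (a b c : A) :
    ev3 f g h (a ⊗ₜ (b ⊗ₜ c)) = f a * (g b * h c) := by
  simp [ev3, TensorProduct.dualDistrib_apply]

lemma sep [FiniteDimensional k A] (t : A ⊗[k] (A ⊗[k] A))
    (H : ∀ f g h : Module.Dual k A, ev3 f g h t = 0) : t = 0 := by
  rw [← Module.forall_dual_apply_eq_zero_iff k t]
  intro φ
  obtain ⟨s, rfl⟩ := (TensorProduct.dualDistribEquiv k A (A ⊗[k] A)).surjective φ
  have hco : ∀ s : Module.Dual k A ⊗[k] Module.Dual k (A ⊗[k] A),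
      (TensorProduct.dualDistribEquiv k A (A ⊗[k] A)) s
        = TensorProduct.dualDistrib k A (A ⊗[k] A) s := fun s => rfl
  rw [hco]
  induction s using TensorProduct.induction_on with
  | zero => simp
  | add u v hu hv => rw [map_add, LinearMap.add_apply, hu, hv, add_zero]
  | tmul f G =>
    obtain ⟨s', rfl⟩ := (TensorProduct.dualDistribEquiv k A A).surjective G
    have hco2 : ∀ s : Module.Dual k A ⊗[k] Module.Dual k A,
        (TensorProduct.dualDistribEquiv k A A) s = TensorProduct.dualDistrib k A A s :=
      fun s => rfl
    rw [hco2]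
    induction s' using TensorProduct.induction_on with
    | zero => simp
    | add u v hu hv => rw [map_add, tmul_add, map_add, LinearMap.add_apply, hu, hv, add_zero]
    | tmul g h => exact H f g h

end Aux
section Terms

variable {A : Type v} [AddCommGroup A] [Module k A]
variable (m : A →ₗ[k] A →ₗ[k] A) (B : A →ₗ[k] Module.Dual k A)

lemma Tr_comm_apply (r : A ⊗[k] A) (f g : Module.Dual k A) :
    g (Tr ((TensorProduct.comm k A A) r) f) = f (Tr r g) := by
  induction r using TensorProduct.induction_on with
  | zero => simp
  | add u v hu hv => simp [map_add, hu, hv]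
  | tmul a b => simp [mul_comm]

lemma ev3_c2312 (hinv : ∀ x y z, B (m x y) z = B x (m y z)) (x y z : A) (r₁ r₂ : A ⊗[k] A) :
    ev3 (B x) (B y) (B z) (comp23_12 m (r₁ ⊗ₜ r₂))
      = B x (Tr r₂ (B (m y (Tr r₁ (B z))))) := by
  induction r₁ using TensorProduct.induction_on with
  | zero => simp
  | add u v hu hv => simp only [add_tmul, tmul_add, map_add, LinearMap.add_apply, hu, hv]
  | tmul a b =>
    induction r₂ using TensorProduct.induction_on with
    | zero => simp
    | add u v hu hv => simp only [add_tmul, tmul_add, map_add, LinearMap.add_apply, hu, hv]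
    | tmul c d =>
      simp [comp23_12, tlift, map_smul, smul_eq_mul, hinv]
      ring

lemma ev3_c1213 (x y z : A) (r₁ r₂ : A ⊗[k] A) :
    ev3 (B x) (B y) (B z) (comp12_13 m (r₁ ⊗ₜ r₂))
      = B x (m (Tr r₁ (B y)) (Tr r₂ (B z))) := by
  induction r₁ using TensorProduct.induction_on with
  | zero => simp
  | add u v hu hv => simp only [add_tmul, tmul_add, map_add, LinearMap.add_apply, hu, hv]
  | tmul a b =>
    induction r₂ using TensorProduct.induction_on with
    | zero => simp
    | add u v hu hv => simp only [add_tmul, tmul_add, map_add, LinearMap.add_apply, hu, hv]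
    | tmul c d =>
      simp [comp12_13, tlift, map_smul, smul_eq_mul]
      ring

lemma ev3_c1323 (x y z : A) (r₁ r₂ : A ⊗[k] A) :
    ev3 (B x) (B y) (B z) (comp13_23 m (r₁ ⊗ₜ r₂))
      = B z (m (Tr ((TensorProduct.comm k A A) r₁) (B x))
              (Tr ((TensorProduct.comm k A A) r₂) (B y))) := by
  induction r₁ using TensorProduct.induction_on with
  | zero => simp
  | add u v hu hv => simp only [add_tmul, tmul_add, map_add, LinearMap.add_apply, hu, hv]
  | tmul a b =>
    induction r₂ using TensorProduct.induction_on with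
    | zero => simp
    | add u v hu hv => simp only [add_tmul, tmul_add, map_add, LinearMap.add_apply, hu, hv]
    | tmul c d =>
      simp [comp13_23, tlift, map_smul, smul_eq_mul]
      ring

end Terms
theorem stmt8 {A : Type v} [AddCommGroup A] [Module k A] [FiniteDimensional k A]
    (hchar : (2 : k) ≠ 0) (m : A →ₗ[k] A →ₗ[k] A) (halt : IsAlt m)
    (B : A →ₗ[k] Module.Dual k A)
    (hsymm : ∀ x y, B x y = B y x)
    (hnondeg : ∀ x, (∀ y, B x y = 0) → x = 0)
    (hinv : ∀ x y z, B (m x y) z = B x (m y z))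
    (r : A ⊗[k] A) (hskew : TensorProduct.comm k A A r = -r) :
    (ayb m r = 0 ↔
      ∀ x y : A, m ((Tr r ∘ₗ B) x) ((Tr r ∘ₗ B) y) =
        (Tr r ∘ₗ B) (m ((Tr r ∘ₗ B) x) y + m x ((Tr r ∘ₗ B) y))) ∧
    (ayb m r = 0 → IsPreAlt (m.compl₂ (Tr r ∘ₗ B)) (m ∘ₗ (Tr r ∘ₗ B))) := by
  set T : A →ₗ[k] A := Tr r ∘ₗ B with hT
  have hTapp : ∀ w, T w = Tr r (B w) := fun w => rfl
  -- skew-adjointness of T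
  have skadj : ∀ u w : A, B u (T w) = - B w (T u) := by
    intro u w
    have h1 := Tr_comm_apply (k := k) r (B w) (B u)
    rw [hskew, map_neg, LinearMap.neg_apply, map_neg] at h1
    have := neg_eq_iff_eq_neg.mp h1
    simpa [hTapp] using this
  -- the key pairing identity
  have key : ∀ x y z : A, ev3 (B x) (B y) (B z) (ayb m r)
      = B z (T (m (T x) y + m x (T y)) - m (T x) (T y)) := by
    intro x y z
    have t1 : ev3 (B x) (B y) (B z) (comp23_12 m (r ⊗ₜ r)) = B z (T (m (T x) y)) := by
      rw [ev3_c2312 m B hinv]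
      calc B x (Tr r (B (m y (Tr r (B z)))))
          = - B (m y (T z)) (T x) := by rw [← hTapp, ← hTapp, skadj]
        _ = - B y (m (T z) (T x)) := by rw [hinv]
        _ = - B (m (T z) (T x)) y := by rw [hsymm]
        _ = - B (T z) (m (T x) y) := by rw [hinv]
        _ = - B (m (T x) y) (T z) := by rw [hsymm]
        _ = B z (T (m (T x) y)) := by rw [skadj]; ring
    have t2 : ev3 (B x) (B y) (B z) (comp12_13 m (r ⊗ₜ r)) = - B z (T (m x (T y))) := by
      rw [ev3_c1213 m B]
      calc B x (m (Tr r (B y)) (Tr r (B z)))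
          = B (m x (T y)) (T z) := by rw [hinv, hTapp, hTapp]
        _ = - B z (T (m x (T y))) := skadj _ _
    have t3 : ev3 (B x) (B y) (B z) (comp13_23 m (r ⊗ₜ r)) = B z (m (T x) (T y)) := by
      rw [ev3_c1323 m B, hskew]
      simp [hTapp]
    unfold ayb
    rw [map_sub, map_sub, t1, t2, t3]
    simp only [map_sub, map_add]
    ring
  -- nondegeneracy in the other slot
  have ndg : ∀ w : A, (∀ z, B z w = 0) → w = 0 := by
    intro w h
    exact hnondeg w (fun z => (hsymm w z).trans (h z))
  -- surjectivity of B
  have hBsurj : Function.Surjective B := by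
    have hinj : Function.Injective B := by
      rw [← LinearMap.ker_eq_bot, LinearMap.ker_eq_bot']
      intro x hx
      exact hnondeg x (fun y => by rw [hx]; rfl)
    exact (LinearMap.injective_iff_surjective_of_finrank_eq_finrank
      (Subspace.dual_finrank_eq (K := k) (V := A)).symm).mp hinj
  have main : ayb m r = 0 ↔
      ∀ x y : A, m (T x) (T y) = T (m (T x) y + m x (T y)) := by
    constructor
    · intro h x y
      have hz : ∀ z, B z (T (m (T x) y + m x (T y)) - m (T x) (T y)) = 0 := by
        intro z
        rw [← key x y z, h, map_zero]
      have := ndg _ hz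
      rw [sub_eq_zero] at this
      exact this.symm
    · intro h
      apply sep
      intro f g h'
      obtain ⟨x, rfl⟩ := hBsurj f
      obtain ⟨y, rfl⟩ := hBsurj g
      obtain ⟨z, rfl⟩ := hBsurj h'
      rw [key x y z, ← h x y, sub_self, map_zero]
  refine ⟨main, ?_⟩
  intro h
  have RB : ∀ x y : A, m (T x) (T y) = T (m (T x) y + m x (T y)) := main.mp h
  -- linearized alternativity
  have linL : ∀ a b c : A, m (m a b) c + m (m b a) c = m a (m b c) + m b (m a c) := by
    intro a b c
    have h1 := halt.1 (a + b) c
    simp only [map_add, LinearMap.add_apply] at h1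
    have h2 := halt.1 a c
    have h3 := halt.1 b c
    -- h1 : m(m a a)c + m(m a b)c + (m(m b a)c + m(m b b)c) = ...
    rw [h2, h3] at h1
    linear_combination (norm := abel_nf) h1
  have linR : ∀ a b c : A, m (m a b) c + m (m a c) b = m a (m b c) + m a (m c b) := by
    intro a b c
    have h1 := halt.2 (b + c) a
    simp only [map_add, LinearMap.add_apply] at h1
    have h2 := halt.2 b a
    have h3 := halt.2 c a
    rw [h2, h3] at h1
    linear_combination (norm := abel_nf) h1
  have papp : ∀ x y : A, (m.compl₂ T) x y = m x (T y) := fun x y => rfl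
  have sapp : ∀ x y : A, (m ∘ₗ T) x y = m (T x) y := fun x y => rfl
  refine ⟨?_, ?_, ?_, ?_⟩
  · intro x y z
    simp only [mAssoc, rAssoc, papp, sapp]
    rw [add_comm (m x (T z)) (m (T x) z), ← RB x z]
    linear_combination (norm := abel_nf) linL (T x) y (T z)
  · intro x y z
    simp only [mAssoc, lAssoc, papp, sapp]
    rw [add_comm (m x (T z)) (m (T x) z), ← RB x z]
    linear_combination (norm := abel_nf) linR (T x) y (T z)
  · intro x y
    simp only [rAssoc, papp, sapp]
    rw [add_comm (m x (T x)) (m (T x) x), ← RB x x]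
    linear_combination (norm := abel_nf) halt.2 (T x) y
  · intro x y
    simp only [lAssoc, papp, sapp]
    rw [add_comm (m x (T x)) (m (T x) x), ← RB x x]
    linear_combination (norm := abel_nf) halt.1 (T x) y
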